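/- Fix ε with 0 ≤ ε ≤ 1/2 and set X̃ = (1−2ε)X + 2√(ε(1−ε))Z and Z̃ = (1−2ε)Z + 2√(ε(1−ε))X. Let |χ⟩ = cos(π/8)|0⟩ + sin(π/8)|1⟩ and let W̃⁽⁴⁾ = 4·X̃⊗X̃⊗X̃⊗X̃ + I⊗I⊗Z̃⊗Z̃ + I⊗Z̃⊗I⊗Z̃ + I⊗Z̃⊗Z̃⊗I + Z̃⊗I⊗I⊗Z̃ + Z̃⊗I⊗Z̃⊗I + Z̃⊗Z̃⊗I⊗I + Z̃⊗Z̃⊗Z̃⊗Z̃. Then the expectation value of W̃⁽⁴⁾ in the product state |χ⟩^{⊗4} equals 17/4 + 20ε(1−ε)(1−2ε)² + 22(1−2ε)√(ε(1−ε)). -/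
import Mathlib


open Matrix Complex Kronecker

noncomputable section

def PauliX : Matrix (Fin 2) (Fin 2) ℂ := !![0, 1; 1, 0]
def PauliY : Matrix (Fin 2) (Fin 2) ℂ := !![0, -Complex.I; Complex.I, 0]
def PauliZ : Matrix (Fin 2) (Fin 2) ℂ := !![1, 0; 0, -1]

/-- The 2×2 identity matrix. -/
def Id2 : Matrix (Fin 2) (Fin 2) ℂ := 1

/-- The largest eigenvalue of a (Hermitian) matrix, as the supremum of the
    Rayleigh quotient over unit vectors. -/
noncomputable def maxEig {m : Type*} [Fintype m] [DecidableEq m]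
    (M : Matrix m m ℂ) : ℝ :=
  ⨆ v : {v : m → ℂ // ∑ i, Complex.normSq (v i) = 1},
    (star v.1 ⬝ᵥ (M *ᵥ v.1)).re

/-- a(θ) = ⟨X̃₁⟩ = 2√(ε(1−ε))·cos 2θ + (1−2ε)·sin 2θ. -/
def aCoef (ε θ : ℝ) : ℝ :=
  2 * Real.sqrt (ε * (1 - ε)) * Real.cos (2 * θ) + (1 - 2 * ε) * Real.sin (2 * θ)

/-- b(θ) = ⟨Z̃₁⟩ = (1−2ε)·cos 2θ + 2√(ε(1−ε))·sin 2θ. -/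
def bCoef (ε θ : ℝ) : ℝ :=
  (1 - 2 * ε) * Real.cos (2 * θ) + 2 * Real.sqrt (ε * (1 - ε)) * Real.sin (2 * θ)

/-- The tilted observable X̃ = (1−2ε)X + 2√(ε(1−ε))Z. -/
def Xt (ε : ℝ) : Matrix (Fin 2) (Fin 2) ℂ :=
  ((1 - 2 * ε : ℝ) : ℂ) • PauliX + ((2 * Real.sqrt (ε * (1 - ε)) : ℝ) : ℂ) • PauliZ

/-- The tilted observable Z̃ = (1−2ε)Z + 2√(ε(1−ε))X. -/
def Zt (ε : ℝ) : Matrix (Fin 2) (Fin 2) ℂ :=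
  ((1 - 2 * ε : ℝ) : ℂ) • PauliZ + ((2 * Real.sqrt (ε * (1 - ε)) : ℝ) : ℂ) • PauliX

/-- |χ⟩ = cos(π/8)|0⟩ + sin(π/8)|1⟩. -/
def chiVec : Fin 2 → ℂ := fun i =>
  if i = 0 then ((Real.cos (Real.pi / 8) : ℝ) : ℂ) else ((Real.sin (Real.pi / 8) : ℝ) : ℂ)

/-- The product vector |χ⟩^{⊗4}. -/
def chi4 : ((Fin 2 × Fin 2) × Fin 2) × Fin 2 → ℂ := fun p =>
  chiVec p.1.1.1 * chiVec p.1.1.2 * chiVec p.1.2 * chiVec p.2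

/-- The fully tilted four-qubit stabilizer witness
    W̃⁽⁴⁾ = 4·X̃⊗X̃⊗X̃⊗X̃ + I⊗I⊗Z̃⊗Z̃ + I⊗Z̃⊗I⊗Z̃ + I⊗Z̃⊗Z̃⊗I + Z̃⊗I⊗I⊗Z̃
          + Z̃⊗I⊗Z̃⊗I + Z̃⊗Z̃⊗I⊗I + Z̃⊗Z̃⊗Z̃⊗Z̃. -/
def W4tilt (ε : ℝ) :
    Matrix (((Fin 2 × Fin 2) × Fin 2) × Fin 2) (((Fin 2 × Fin 2) × Fin 2) × Fin 2) ℂ :=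
  (4 : ℂ) • (Xt ε ⊗ₖ Xt ε ⊗ₖ Xt ε ⊗ₖ Xt ε)
    + Id2 ⊗ₖ Id2 ⊗ₖ Zt ε ⊗ₖ Zt ε + Id2 ⊗ₖ Zt ε ⊗ₖ Id2 ⊗ₖ Zt ε
    + Id2 ⊗ₖ Zt ε ⊗ₖ Zt ε ⊗ₖ Id2 + Zt ε ⊗ₖ Id2 ⊗ₖ Id2 ⊗ₖ Zt ε
    + Zt ε ⊗ₖ Id2 ⊗ₖ Zt ε ⊗ₖ Id2 + Zt ε ⊗ₖ Zt ε ⊗ₖ Id2 ⊗ₖ Id2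
    + Zt ε ⊗ₖ Zt ε ⊗ₖ Zt ε ⊗ₖ Zt ε


/-- Auxiliary: product-to-sum for the angle π/8. -/
lemma two_cs_aux : 2 * Real.sin (Real.pi/8) * Real.cos (Real.pi/8) = Real.sqrt 2 / 2 := by
  rw [← Real.sin_two_mul, show 2 * (Real.pi/8) = Real.pi/4 by ring, Real.sin_pi_div_four]

lemma cs_sq_diff_aux : Real.cos (Real.pi/8)^2 - Real.sin (Real.pi/8)^2 = Real.sqrt 2 / 2 := by
  have h := Real.cos_two_mul (Real.pi/8)
  rw [show 2*(Real.pi/8) = Real.pi/4 by ring, Real.cos_pi_div_four] at h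
  have hp := Real.sin_sq_add_cos_sq (Real.pi/8)
  linarith

/-- The quadratic form of a 4-fold Kronecker product on the product vector factors. -/
lemma quad_factor_aux (A B C D : Matrix (Fin 2) (Fin 2) ℂ) :
    star chi4 ⬝ᵥ ((A ⊗ₖ B ⊗ₖ C ⊗ₖ D) *ᵥ chi4) =
    (star chiVec ⬝ᵥ (A *ᵥ chiVec)) * (star chiVec ⬝ᵥ (B *ᵥ chiVec)) *
      (star chiVec ⬝ᵥ (C *ᵥ chiVec)) * (star chiVec ⬝ᵥ (D *ᵥ chiVec)) := by
  simp only [dotProduct, mulVec, chi4, Fintype.sum_prod_type, Fin.sum_univ_two,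
    kroneckerMap_apply, Pi.star_apply, star_mul']
  ring

lemma eId_aux : star chiVec ⬝ᵥ (Id2 *ᵥ chiVec) = 1 := by
  have hI : Id2 *ᵥ chiVec = chiVec := by
    simp [Id2]
  rw [hI]
  simp only [dotProduct, Fin.sum_univ_two, chiVec, Pi.star_apply, Fin.isValue, Fin.reduceEq, reduceIte, if_true, if_false,
    RCLike.star_def, Complex.conj_ofReal]
  have hp := Real.sin_sq_add_cos_sq (Real.pi/8)
  set c := Real.cos (Real.pi/8) with hc
  set s := Real.sin (Real.pi/8) with hs
  have hpc : (s:ℂ)^2 + (c:ℂ)^2 = 1 := by exact_mod_cast congrArg Complex.ofReal hp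
  linear_combination hpc

lemma eXt_aux (ε : ℝ) : star chiVec ⬝ᵥ (Xt ε *ᵥ chiVec) =
    (((1 - 2*ε + 2 * Real.sqrt (ε * (1 - ε))) * (Real.sqrt 2 / 2) : ℝ) : ℂ) := by
  simp only [dotProduct, mulVec, Fin.sum_univ_two, Xt, PauliX, PauliZ, chiVec, Pi.star_apply,
    Fin.isValue, reduceIte, Matrix.of_apply, Matrix.cons_val', Matrix.cons_val_zero,
    Matrix.cons_val_one, Matrix.head_cons, Matrix.head_fin_const, Matrix.empty_val',
    Matrix.cons_val_fin_one, Matrix.add_apply, Matrix.smul_apply, smul_eq_mul, one_ne_zero,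
    RCLike.star_def, Complex.conj_ofReal]
  have h1 := two_cs_aux
  have h2 := cs_sq_diff_aux
  set c := Real.cos (Real.pi/8) with hc
  set s := Real.sin (Real.pi/8) with hs
  have h1c : 2 * (s:ℂ) * c = (Real.sqrt 2 : ℂ)/2 := by exact_mod_cast congrArg Complex.ofReal h1
  have h2c : (c:ℂ)^2 - (s:ℂ)^2 = (Real.sqrt 2 : ℂ)/2 := by
    exact_mod_cast congrArg Complex.ofReal h2
  push_cast
  linear_combination ((1:ℂ) - 2*ε) * h1c + (2 * (Real.sqrt (ε*(1-ε)) : ℂ)) * h2c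

lemma eZt_aux (ε : ℝ) : star chiVec ⬝ᵥ (Zt ε *ᵥ chiVec) =
    (((1 - 2*ε + 2 * Real.sqrt (ε * (1 - ε))) * (Real.sqrt 2 / 2) : ℝ) : ℂ) := by
  simp only [dotProduct, mulVec, Fin.sum_univ_two, Zt, PauliX, PauliZ, chiVec, Pi.star_apply,
    Fin.isValue, reduceIte, Matrix.of_apply, Matrix.cons_val', Matrix.cons_val_zero,
    Matrix.cons_val_one, Matrix.head_cons, Matrix.head_fin_const, Matrix.empty_val',
    Matrix.cons_val_fin_one, Matrix.add_apply, Matrix.smul_apply, smul_eq_mul, one_ne_zero,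
    RCLike.star_def, Complex.conj_ofReal]
  have h1 := two_cs_aux
  have h2 := cs_sq_diff_aux
  set c := Real.cos (Real.pi/8) with hc
  set s := Real.sin (Real.pi/8) with hs
  have h1c : 2 * (s:ℂ) * c = (Real.sqrt 2 : ℂ)/2 := by exact_mod_cast congrArg Complex.ofReal h1
  have h2c : (c:ℂ)^2 - (s:ℂ)^2 = (Real.sqrt 2 : ℂ)/2 := by
    exact_mod_cast congrArg Complex.ofReal h2
  push_cast
  linear_combination (2 * (Real.sqrt (ε*(1-ε)) : ℂ)) * h1c + ((1:ℂ) - 2*ε) * h2c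

/-- the value of the fully tilted four-qubit stabilizer witness
    on the fully separable product state |χ(π/8)⟩^{⊗4}. -/
theorem stab4_fully_separable_value (ε : ℝ) (hε0 : 0 ≤ ε) (hε1 : ε ≤ 1 / 2) :
    star chi4 ⬝ᵥ (W4tilt ε *ᵥ chi4) =
      ((17 / 4 + 20 * ε * (1 - ε) * (1 - 2 * ε) ^ 2
          + 22 * (1 - 2 * ε) * Real.sqrt (ε * (1 - ε)) : ℝ) : ℂ) := by
  have key : star chi4 ⬝ᵥ (W4tilt ε *ᵥ chi4) =
      (4:ℂ) * ((star chiVec ⬝ᵥ (Xt ε *ᵥ chiVec))^4)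
        + 6 * ((star chiVec ⬝ᵥ (Zt ε *ᵥ chiVec))^2) * (star chiVec ⬝ᵥ (Id2 *ᵥ chiVec))^2
        + (star chiVec ⬝ᵥ (Zt ε *ᵥ chiVec))^4 := by
    simp only [W4tilt, Matrix.add_mulVec, Matrix.smul_mulVec, dotProduct_add,
      dotProduct_smul, quad_factor_aux, smul_eq_mul]
    ring
  rw [key, eId_aux, eXt_aux, eZt_aux]
  set a : ℝ := (1 - 2*ε + 2 * Real.sqrt (ε * (1 - ε))) * (Real.sqrt 2 / 2) with ha
  have ht : (Real.sqrt (ε * (1 - ε)))^2 = ε * (1 - ε) :=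
    Real.sq_sqrt (by nlinarith)
  have hr : (Real.sqrt 2)^2 = 2 := Real.sq_sqrt (by norm_num)
  have hu2 : a^2 = (1 + 4*(1 - 2*ε)*Real.sqrt (ε * (1 - ε)))/2 := by
    rw [ha]
    linear_combination ((1 - 2*ε + 2*Real.sqrt (ε * (1 - ε)))^2/4)*hr + 2*ht
  have hreal : 4*a^4 + 6*a^2 + a^4 =
      17 / 4 + 20 * ε * (1 - ε) * (1 - 2 * ε) ^ 2
        + 22 * (1 - 2 * ε) * Real.sqrt (ε * (1 - ε)) := by
    have h4 : a^4 = ((1 + 4*(1 - 2*ε)*Real.sqrt (ε * (1 - ε)))/2)^2 := by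
      rw [show a^4 = (a^2)^2 by ring, hu2]
    rw [h4, hu2]
    linear_combination 20*(1 - 2*ε)^2*ht
  push_cast [← hreal]
  ring
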